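/- (Convergence rate of the Lax-Friedrichs method.) Assume H is ℓ¹-Lipschitz in p with constant L, Lipschitz in u with some constant L_u, and nondecreasing in u; assume θ > 0 and β ≥ L/2. Let U be a solution of the Lax-Friedrichs scheme, let u : ℝ^d → ℝ, write û for the grid function û_α = u(x_α), and suppose that u(x_α) = g(x_α) at every boundary index α and that for constants K ≥ 0 and r > 0 the truncation bound |Ĥ_LF[û]_α| ≤ K·h_max^r holds at every interior index α. Then max over grid indices α of |u(x_α) − U_α| ≤ (2K/θ)·h_max^r. -/

import Mathlib

open Finset

/-- `α` is an interior index: `0 < α i < J i` for all `i`. -/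
def isInterior {d : ℕ} (J : Fin d → ℤ) (α : Fin d → ℤ) : Prop :=
  ∀ i, 0 < α i ∧ α i < J i

/-- `α` is a grid index: `0 ≤ α i ≤ J i` for all `i`. -/
def isGrid {d : ℕ} (J : Fin d → ℤ) (α : Fin d → ℤ) : Prop :=
  ∀ i, 0 ≤ α i ∧ α i ≤ J i

/-- `α` is a boundary index: a grid index with `α i ∈ {0, J i}` for some `i`. -/
def isBoundary {d : ℕ} (J : Fin d → ℤ) (α : Fin d → ℤ) : Prop :=
  isGrid J α ∧ ∃ i, α i = 0 ∨ α i = J i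

instance {d : ℕ} (J α : Fin d → ℤ) : Decidable (isInterior J α) :=
  inferInstanceAs (Decidable (∀ i, 0 < α i ∧ α i < J i))

instance {d : ℕ} (J α : Fin d → ℤ) : Decidable (isGrid J α) :=
  inferInstanceAs (Decidable (∀ i, 0 ≤ α i ∧ α i ≤ J i))

/-- The grid node `x_α = a + (α₁h₁, …, α_dh_d)`. -/
noncomputable def xpt {d : ℕ} (a h : Fin d → ℝ) (α : Fin d → ℤ) : Fin d → ℝ :=
  fun i => a i + (α i : ℝ) * h i

/-- Second central difference `δᵢ² U_α = (U_{α+eᵢ} − 2U_α + U_{α−eᵢ})/hᵢ²`. -/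
noncomputable def delta2 {d : ℕ} (h : Fin d → ℝ) (U : (Fin d → ℤ) → ℝ) (i : Fin d)
    (α : Fin d → ℤ) : ℝ :=
  (U (α + Pi.single i 1) - 2 * U α + U (α - Pi.single i 1)) / (h i) ^ 2

/-- Central discrete gradient `∇_h U_α`. -/
noncomputable def gradh {d : ℕ} (h : Fin d → ℝ) (U : (Fin d → ℤ) → ℝ) (α : Fin d → ℤ) :
    Fin d → ℝ :=
  fun i => (U (α + Pi.single i 1) - U (α - Pi.single i 1)) / (2 * h i)

/-- Lax-Friedrichs operator
`Ĥ_LF[U]_α = −β Σᵢ hᵢ δᵢ² U_α + H(∇_h U_α, U_α, x_α) + θ U_α`. -/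
noncomputable def HLF {d : ℕ} (h : Fin d → ℝ) (H : (Fin d → ℝ) → ℝ → (Fin d → ℝ) → ℝ)
    (θ β : ℝ) (a : Fin d → ℝ) (U : (Fin d → ℤ) → ℝ) (α : Fin d → ℤ) : ℝ :=
  -β * (∑ i, h i * delta2 h U i α) + H (gradh h U α) (U α) (xpt a h α) + θ * U α

/-!
A discrete comparison principle. If `V` and `U` agree on the boundary and
`Ĥ_LF[V] - Ĥ_LF[U] ≤ C` in the interior, look at a grid maximum of `W = V - U`. At an interior
maximum with `W ≥ 0`, the artificial viscosity `-β Σᵢ hᵢ δᵢ² W ≥ 0` dominates the change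
`L Σᵢ |∇_h W|ᵢ` of `H` in `p` as soon as `2β ≥ L`, since `|W₊ - W₋| ≤ (W₀ - W₊) + (W₀ - W₋)`;
monotonicity in `u` then leaves `θ W ≤ C`. Applied to `(û, U)` and `(U, û)` with
`C = K h_max^r`, this gives the two-sided bound.
-/

lemma nonneg_of_abs_sub_le_mul_sum {ι : Type*} [Fintype ι] [Nonempty ι] (f : (ι → ℝ) → ℝ)
    (L : ℝ) (hf : ∀ p q : ι → ℝ, |f p - f q| ≤ L * ∑ i, |p i - q i|) : 0 ≤ L := by
  have hfL := (abs_nonneg _).trans (hf 1 0)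
  simp only [Pi.one_apply, Pi.zero_apply, sub_zero, abs_one, sum_const, card_univ,
    nsmul_eq_mul, mul_one] at hfL
  exact nonneg_of_mul_nonneg_left hfL (by exact_mod_cast Fintype.card_pos)

section Grid

variable {d : ℕ} {J α : Fin d → ℤ}

lemma isInterior_of_isGrid_of_not_isBoundary (hg : isGrid J α) (hb : ¬ isBoundary J α) :
    isInterior J α := by
  simp only [isBoundary, hg, true_and, not_exists, not_or] at hb
  intro i
  have := hg i
  have := hb i
  omega

lemma isGrid_add_single_of_isInterior (hα : isInterior J α) (i : Fin d) :
    isGrid J (α + Pi.single i 1) := by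
  intro j
  have := hα j
  rcases eq_or_ne j i with rfl | hji
  · simp only [Pi.add_apply, Pi.single_eq_same]; omega
  · simp only [Pi.add_apply, Pi.single_eq_of_ne hji]; omega

lemma isGrid_sub_single_of_isInterior (hα : isInterior J α) (i : Fin d) :
    isGrid J (α - Pi.single i 1) := by
  intro j
  have := hα j
  rcases eq_or_ne j i with rfl | hji
  · simp only [Pi.sub_apply, Pi.single_eq_same]; omega
  · simp only [Pi.sub_apply, Pi.single_eq_of_ne hji]; omega

lemma exists_max_image_isGrid (J : Fin d → ℤ) (hα : isGrid J α) (W : (Fin d → ℤ) → ℝ) :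
    ∃ α₀, isGrid J α₀ ∧ ∀ α', isGrid J α' → W α' ≤ W α₀ := by
  have hmem : ∀ α', α' ∈ Fintype.piFinset (fun i => Icc 0 (J i)) ↔ isGrid J α' := by
    simp [Fintype.mem_piFinset, isGrid]
  obtain ⟨α₀, hα₀, hmax⟩ := exists_max_image _ W ⟨α, (hmem α).2 hα⟩
  exact ⟨α₀, (hmem α₀).1 hα₀, fun α' hα' => hmax α' ((hmem α').2 hα')⟩

end Grid

section Scheme

variable {d : ℕ} (h : Fin d → ℝ) (a : Fin d → ℝ) (H : (Fin d → ℝ) → ℝ → (Fin d → ℝ) → ℝ)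
  (θ β L : ℝ)

lemma gradh_sub (V U : (Fin d → ℤ) → ℝ) (α : Fin d → ℤ) :
    gradh h (V - U) α = gradh h V α - gradh h U α := by
  ext i
  simp only [gradh, Pi.sub_apply]
  ring

lemma delta2_sub (V U : (Fin d → ℤ) → ℝ) (i : Fin d) (α : Fin d → ℤ) :
    delta2 h (V - U) i α = delta2 h V i α - delta2 h U i α := by
  simp only [delta2, Pi.sub_apply]
  ring

variable {h}

lemma mul_abs_gradh_le_neg_mul_delta2 {W : (Fin d → ℤ) → ℝ} {α : Fin d → ℤ} {i : Fin d}
    (hi : 0 < h i) (hL : 0 ≤ L) (hβ : L / 2 ≤ β)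
    (hp : W (α + Pi.single i 1) ≤ W α) (hm : W (α - Pi.single i 1) ≤ W α) :
    L * |gradh h W α i| ≤ -β * (h i * delta2 h W i α) := by
  set Wp := W (α + Pi.single i 1)
  set Wm := W (α - Pi.single i 1)
  have hvisc : h i * delta2 h W i α = -((W α - Wp) + (W α - Wm)) / h i := by
    simp only [delta2]
    field_simp
    ring
  have hS : 0 ≤ (W α - Wp) + (W α - Wm) := by linarith
  calc L * |gradh h W α i| = L * |Wp - Wm| / (2 * h i) := by
        rw [gradh, abs_div, abs_of_pos (by positivity : 0 < 2 * h i), mul_div_assoc]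
    _ ≤ L * ((W α - Wp) + (W α - Wm)) / (2 * h i) := by
        gcongr
        exact abs_le.2 ⟨by linarith, by linarith⟩
    _ ≤ β * ((W α - Wp) + (W α - Wm)) / h i := by
        rw [div_le_div_iff₀ (by positivity) hi]
        nlinarith [mul_nonneg (mul_nonneg (by linarith : 0 ≤ 2 * β - L) hS) hi.le]
    _ = -β * (h i * delta2 h W i α) := by rw [hvisc]; ring

lemma mul_sub_le_HLF_sub_HLF (hh : ∀ i, 0 < h i) (hL : 0 ≤ L)
    (hLip : ∀ (p q : Fin d → ℝ) (v : ℝ) (x : Fin d → ℝ),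
      |H p v x - H q v x| ≤ L * ∑ i, |p i - q i|)
    (hmono : ∀ (p : Fin d → ℝ) (x : Fin d → ℝ), Monotone fun v => H p v x)
    (hβ : L / 2 ≤ β) {V U : (Fin d → ℤ) → ℝ} {α : Fin d → ℤ}
    (hp : ∀ i, (V - U) (α + Pi.single i 1) ≤ (V - U) α)
    (hm : ∀ i, (V - U) (α - Pi.single i 1) ≤ (V - U) α) (hnonneg : 0 ≤ (V - U) α) :
    θ * (V - U) α ≤ HLF h H θ β a V α - HLF h H θ β a U α := by
  have hvisc : L * ∑ i, |(gradh h V α - gradh h U α) i| ≤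
      -β * (∑ i, h i * delta2 h V i α - ∑ i, h i * delta2 h U i α) := by
    rw [← sum_sub_distrib, mul_sum, mul_sum]
    refine sum_le_sum fun i _ => ?_
    rw [← gradh_sub, ← mul_sub, ← delta2_sub]
    exact mul_abs_gradh_le_neg_mul_delta2 β L (hh i) hL hβ (hp i) (hm i)
  have hgrad := neg_abs_le (H (gradh h V α) (V α) (xpt a h α) -
      H (gradh h U α) (V α) (xpt a h α))
  have hLipV := hLip (gradh h V α) (gradh h U α) (V α) (xpt a h α)
  have hmonoU : H (gradh h U α) (U α) (xpt a h α) ≤ H (gradh h U α) (V α) (xpt a h α) :=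
    hmono _ _ (sub_nonneg.1 hnonneg)
  simp only [HLF, Pi.sub_apply] at hvisc hnonneg ⊢
  linarith

lemma sub_le_div_of_HLF_sub_HLF_le {J : Fin d → ℤ} (hh : ∀ i, 0 < h i) (hθ : 0 < θ)
    (hL : 0 ≤ L)
    (hLip : ∀ (p q : Fin d → ℝ) (v : ℝ) (x : Fin d → ℝ),
      |H p v x - H q v x| ≤ L * ∑ i, |p i - q i|)
    (hmono : ∀ (p : Fin d → ℝ) (x : Fin d → ℝ), Monotone fun v => H p v x)
    (hβ : L / 2 ≤ β) {V U : (Fin d → ℤ) → ℝ} (hbd : ∀ α, isBoundary J α → V α = U α)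
    {C : ℝ} (hC : 0 ≤ C)
    (hE : ∀ α, isInterior J α → HLF h H θ β a V α - HLF h H θ β a U α ≤ C)
    {α : Fin d → ℤ} (hα : isGrid J α) : V α - U α ≤ C / θ := by
  obtain ⟨α₀, hα₀, hmax⟩ := exists_max_image_isGrid J hα (V - U)
  refine (hmax α hα).trans ?_
  have hCθ : 0 ≤ C / θ := by positivity
  by_cases hb : isBoundary J α₀
  · simpa [hbd α₀ hb] using hCθ
  by_cases hnonneg : 0 ≤ (V - U) α₀
  · have hint := isInterior_of_isGrid_of_not_isBoundary hα₀ hb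
    have hkey := mul_sub_le_HLF_sub_HLF a H θ β L hh hL hLip hmono hβ
      (fun i => hmax _ (isGrid_add_single_of_isInterior hint i))
      (fun i => hmax _ (isGrid_sub_single_of_isInterior hint i)) hnonneg
    rw [le_div_iff₀ hθ, mul_comm]
    exact hkey.trans (hE α₀ hint)
  · linarith

end Scheme

theorem lax_friedrichs_convergence_rate_general {d : ℕ} (hd : 0 < d)
    (J : Fin d → ℤ)
    (h : Fin d → ℝ) (hh : ∀ i, 0 < h i) (a : Fin d → ℝ)
    (hmax : ℝ) (hhmax : hmax = Finset.univ.sup' ⟨⟨0, hd⟩, Finset.mem_univ _⟩ h)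
    (H : (Fin d → ℝ) → ℝ → (Fin d → ℝ) → ℝ)
    (θ : ℝ) (hθ : 0 < θ) (β : ℝ) (g : (Fin d → ℝ) → ℝ)
    (L : ℝ)
    (hLip : ∀ (p q : Fin d → ℝ) (v : ℝ) (x : Fin d → ℝ),
      |H p v x - H q v x| ≤ L * ∑ i, |p i - q i|)
    (hmono : ∀ (p : Fin d → ℝ) (x : Fin d → ℝ), Monotone fun v => H p v x)
    (hβ : L / 2 ≤ β)
    (U : (Fin d → ℤ) → ℝ)
    (hU1 : ∀ α, isInterior J α → HLF h H θ β a U α = 0)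
    (hU2 : ∀ α, isBoundary J α → U α = g (xpt a h α))
    (u : (Fin d → ℝ) → ℝ)
    (hbc : ∀ α, isBoundary J α → u (xpt a h α) = g (xpt a h α))
    (K r : ℝ) (hK : 0 ≤ K)
    (htrunc : ∀ α, isInterior J α →
      |HLF h H θ β a (fun α' => u (xpt a h α')) α| ≤ K * hmax ^ r) :
    ∀ α, isGrid J α → |u (xpt a h α) - U α| ≤ 2 * K / θ * hmax ^ r := by
  have : Nonempty (Fin d) := ⟨⟨0, hd⟩⟩
  have hL : 0 ≤ L := nonneg_of_abs_sub_le_mul_sum (fun p => H p 0 0) L (fun p q => hLip p q 0 0)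
  have hmax_pos : 0 < hmax := hhmax ▸ (hh _).trans_le (le_sup' h (mem_univ ⟨0, hd⟩))
  have hC : 0 ≤ K * hmax ^ r := by positivity
  have hbd : ∀ α, isBoundary J α → u (xpt a h α) = U α := fun α hb => by rw [hbc α hb, hU2 α hb]
  intro α hα
  have hupper := sub_le_div_of_HLF_sub_HLF_le a H θ β L hh hθ hL hLip hmono hβ hbd hC
    (fun α hi => by rw [hU1 α hi, sub_zero]; exact (le_abs_self _).trans (htrunc α hi)) hα
  have hlower := sub_le_div_of_HLF_sub_HLF_le a H θ β L hh hθ hL hLip hmono hβ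
    (fun α hb => (hbd α hb).symm) hC
    (fun α hi => by rw [hU1 α hi, zero_sub]; exact (neg_le_abs _).trans (htrunc α hi)) hα
  rw [abs_sub_le_iff]
  have hbound : 2 * K / θ * hmax ^ r = 2 * (K * hmax ^ r / θ) := by ring
  constructor <;> linarith [div_nonneg hC hθ.le]

/-- Convergence rate of the Lax-Friedrichs method: if `U` solves the scheme,
`u` matches `g` at boundary nodes, and the truncation bound
`|Ĥ_LF[û]_α| ≤ K h_max^r` holds at interior indices, then
`max_α |u(x_α) − U_α| ≤ (2K/θ) h_max^r`. -/
theorem lax_friedrichs_convergence_rate {d : ℕ} (hd : 0 < d)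
    (J : Fin d → ℤ) (hJ : ∀ i, 2 ≤ J i)
    (h : Fin d → ℝ) (hh : ∀ i, 0 < h i) (a : Fin d → ℝ)
    (hmax : ℝ) (hhmax : hmax = Finset.univ.sup' ⟨⟨0, hd⟩, Finset.mem_univ _⟩ h)
    (H : (Fin d → ℝ) → ℝ → (Fin d → ℝ) → ℝ)
    (θ : ℝ) (hθ : 0 < θ) (β : ℝ) (g : (Fin d → ℝ) → ℝ)
    (L Lu : ℝ)
    (hLip : ∀ (p q : Fin d → ℝ) (v : ℝ) (x : Fin d → ℝ),
      |H p v x - H q v x| ≤ L * ∑ i, |p i - q i|)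
    (hLipu : ∀ (p : Fin d → ℝ) (v w : ℝ) (x : Fin d → ℝ),
      |H p v x - H p w x| ≤ Lu * |v - w|)
    (hmono : ∀ (p : Fin d → ℝ) (x : Fin d → ℝ), Monotone fun v => H p v x)
    (hβ : L / 2 ≤ β)
    (U : (Fin d → ℤ) → ℝ)
    (hU1 : ∀ α, isInterior J α → HLF h H θ β a U α = 0)
    (hU2 : ∀ α, isBoundary J α → U α = g (xpt a h α))
    (u : (Fin d → ℝ) → ℝ)
    (hbc : ∀ α, isBoundary J α → u (xpt a h α) = g (xpt a h α))
    (K r : ℝ) (hK : 0 ≤ K) (hr : 0 < r)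
    (htrunc : ∀ α, isInterior J α →
      |HLF h H θ β a (fun α' => u (xpt a h α')) α| ≤ K * hmax ^ r) :
    ∀ α, isGrid J α → |u (xpt a h α) - U α| ≤ 2 * K / θ * hmax ^ r :=
  lax_friedrichs_convergence_rate_general hd J h hh a hmax hhmax H θ hθ β g L hLip hmono hβ U hU1
    hU2 u hbc K r hK htrunc
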